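/- Assume n is a prime with gcd(n, q) = 1 and n ∤ q−1, and let m = ord_n(q) be the multiplicative order of q modulo n. Then ord_{nr}(q) = m, every i ∈ Z_{n,r} satisfies l_i ∈ {1, m}, N_1 = 1, and N_m = (n−1)/m. -/

import Mathlib

/-!
Since `r ∣ q - 1` and `n ∤ q - 1`, `n` and `r` are coprime and `q ≡ 1 (mod r)`, so under
`ℤ/nr ≅ ℤ/n × ℤ/r` multiplication by `q` only acts on the first factor. Hence
`ord_{nr}(q) = lcm(m, 1) = m`, and the coset of `i` has the size of the orbit of `i mod n` under
the powers of `q` in the field `ℤ/n`: `1` if `n ∣ i` and `m` otherwise. Reduction mod `n` is a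
bijection from `Z_{n,r}` onto `ℤ/n`, so exactly one coset in `Z_{n,r}` has size `1`; as the cosets
partition `Z_{n,r}`, counting gives `1 + m N_m = n`.
-/

open scoped Classical

/-- The `q`-cyclotomic coset of `i` modulo `N`, with representatives taken in `{1, …, N}`. -/
noncomputable def cosetOf (q N i : ℕ) : Finset ℕ :=
  (Finset.Icc 1 N).filter (fun x => ∃ j : ℕ, x ≡ i * q ^ j [MOD N])

/-- `Z_{n,r} = {1 + i r : 0 ≤ i ≤ n-1}`. -/
def Zset (n r : ℕ) : Finset ℕ := (Finset.range n).image (fun i => 1 + i * r)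

/-- The collection of `q`-cyclotomic cosets contained in `Z_{n,r}`. -/
noncomputable def cosetsIn (q n r : ℕ) : Finset (Finset ℕ) :=
  (Zset n r).image (fun i => cosetOf q (n * r) i)

/-- `N_l`: the number of `q`-cyclotomic cosets of size `l` contained in `Z_{n,r}`. -/
noncomputable def Ncount (q n r l : ℕ) : ℕ :=
  ((cosetsIn q n r).filter (fun C => C.card = l)).card

/-- Coset leader: the smallest element of a coset. -/
noncomputable def leader (C : Finset ℕ) : ℕ := sInf (C : Set ℕ)

/-- The sorted (increasing) list of coset leaders of the cosets of size `l` in `Z_{n,r}`. -/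
noncomputable def leaderList (q n r l : ℕ) : List ℕ :=
  Finset.sort (((cosetsIn q n r).filter (fun C => C.card = l)).image leader) (· ≤ ·)

/-- `δ_i^{(l)}`: the `i`-th smallest coset leader (1-indexed). -/
noncomputable def delta (q n r l i : ℕ) : ℕ := (leaderList q n r l).getD (i - 1) 0

theorem ncard_range_mul_pow {M : Type*} [MonoidWithZero M] [IsLeftCancelMulZero M] {a g : M}
    (ha : a ≠ 0) (hg : IsOfFinOrder g) :
    (Set.range fun j : ℕ => a * g ^ j).ncard = orderOf g := by
  have : (Set.range fun j : ℕ => a * g ^ j) = (a * ·) '' (Submonoid.powers g : Set M) := by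
    rw [Submonoid.coe_powers, ← Set.range_comp]; rfl
  rw [this, Set.ncard_image_of_injective _ (mul_right_injective₀ ha), ← Nat.card_coe_set_eq,
    SetLike.coe_sort_coe, Nat.card_congr (finEquivPowers hg).symm, Nat.card_eq_fintype_card,
    Fintype.card_fin]

theorem ZMod.ncard_range_mul_pow_of_coprime {n r : ℕ} (hnr : n.Coprime r) {a g : ℕ}
    (hg : (g : ZMod r) = 1) :
    (Set.range fun j : ℕ => (a * g ^ j : ZMod (n * r))).ncard =
      (Set.range fun j : ℕ => (a * g ^ j : ZMod n)).ncard := by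
  set e := ZMod.chineseRemainder hnr
  have he : (e ∘ fun j : ℕ => (a * g ^ j : ZMod (n * r))) =
      (fun y => (y, (a : ZMod r))) ∘ fun j : ℕ => (a * g ^ j : ZMod n) := by
    ext j <;> simp [hg]
  rw [← Set.ncard_image_of_injective _ e.injective, ← Set.range_comp, he, Set.range_comp,
    Set.ncard_image_of_injective _ (Prod.mk_left_injective _)]

theorem ZMod.orderOf_natCast_mul_of_coprime {n r g : ℕ} (hnr : n.Coprime r)
    (hg : (g : ZMod r) = 1) : orderOf (g : ZMod (n * r)) = orderOf (g : ZMod n) := by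
  have he : ZMod.chineseRemainder hnr g = ((g : ZMod n), 1) := by
    rw [map_natCast]; ext <;> simp [hg]
  rw [← (ZMod.chineseRemainder hnr).toMulEquiv.orderOf_eq, RingEquiv.toMulEquiv_eq_coe,
    RingEquiv.coe_toMulEquiv, he, Prod.orderOf_mk, orderOf_one, Nat.lcm_one_right]

theorem ZMod.natCast_eq_one_iff_modEq {a N : ℕ} : (a : ZMod N) = 1 ↔ a ≡ 1 [MOD N] := by
  rw [← Nat.cast_one, ZMod.natCast_eq_natCast_iff]

theorem ZMod.natCast_injOn_Icc (N : ℕ) : Set.InjOn (Nat.cast : ℕ → ZMod N) (Set.Icc 1 N) := by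
  intro x ⟨hx1, hx2⟩ y ⟨hy1, hy2⟩ hxy
  have h : (x - 1) % N = (y - 1) % N := by
    rw [← ZMod.natCast_eq_natCast_iff', Nat.cast_sub hx1, Nat.cast_sub hy1, hxy]
  rw [Nat.mod_eq_of_lt (by omega), Nat.mod_eq_of_lt (by omega)] at h
  omega

theorem ZMod.exists_mem_Icc_natCast_eq (N : ℕ) [NeZero N] (y : ZMod N) :
    ∃ x ∈ Set.Icc 1 N, (x : ZMod N) = y :=
  ⟨(y - 1).val + 1, ⟨by omega, by have := (y - 1).val_lt; omega⟩, by simp⟩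

theorem mem_cosetOf {q N i x : ℕ} :
    x ∈ cosetOf q N i ↔ x ∈ Set.Icc 1 N ∧ ∃ j : ℕ, (x : ZMod N) = i * q ^ j := by
  simp only [cosetOf, Finset.mem_filter, Finset.mem_Icc, Set.mem_Icc,
    ← ZMod.natCast_eq_natCast_iff, Nat.cast_mul, Nat.cast_pow]

theorem card_cosetOf (q N i : ℕ) [NeZero N] :
    (cosetOf q N i).card = (Set.range fun j : ℕ => (i * q ^ j : ZMod N)).ncard := by
  have himage : (Nat.cast : ℕ → ZMod N) '' (cosetOf q N i : Set ℕ) =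
      Set.range fun j : ℕ => (i * q ^ j : ZMod N) := by
    ext y
    simp only [Set.mem_image, Finset.mem_coe, mem_cosetOf, Set.mem_range]
    constructor
    · rintro ⟨x, ⟨-, j, hj⟩, rfl⟩
      exact ⟨j, hj.symm⟩
    · rintro ⟨j, rfl⟩
      obtain ⟨x, hx, hxy⟩ := ZMod.exists_mem_Icc_natCast_eq N (i * q ^ j : ZMod N)
      exact ⟨x, ⟨hx, j, hxy⟩, hxy⟩
  rw [← himage, Set.InjOn.ncard_image, Set.ncard_coe_finset]
  exact (ZMod.natCast_injOn_Icc N).mono fun x hx => (mem_cosetOf.mp hx).1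

theorem self_mem_cosetOf {q N i : ℕ} (hi : i ∈ Set.Icc 1 N) : i ∈ cosetOf q N i :=
  mem_cosetOf.mpr ⟨hi, 0, by simp⟩

theorem cosetOf_eq_of_mem {q N i x : ℕ} (hq : IsOfFinOrder (q : ZMod N))
    (hx : x ∈ cosetOf q N i) : cosetOf q N x = cosetOf q N i := by
  obtain ⟨-, t, ht⟩ := mem_cosetOf.mp hx
  have hinv : (i : ZMod N) = x * q ^ ((orderOf (q : ZMod N) - 1) * t) := by
    rw [ht, mul_assoc, ← pow_add, add_comm, ← add_one_mul, Nat.sub_one_add_one hq.orderOf_pos.ne',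
      pow_mul, pow_orderOf_eq_one, one_pow, mul_one]
  ext y
  simp only [mem_cosetOf, and_congr_right_iff]
  intro _
  constructor
  · rintro ⟨j, hj⟩
    exact ⟨t + j, by rw [hj, ht, mul_assoc, ← pow_add]⟩
  · rintro ⟨j, hj⟩
    exact ⟨_ + j, by rw [hj, hinv, mul_assoc, ← pow_add]⟩

section Zset

variable {n r : ℕ}

theorem mem_Zset (hr : 0 < r) {x : ℕ} :
    x ∈ Zset n r ↔ x ∈ Set.Icc 1 (n * r) ∧ x ≡ 1 [MOD r] := by
  simp only [Zset, Finset.mem_image, Finset.mem_range, Set.mem_Icc]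
  constructor
  · rintro ⟨j, hj, rfl⟩
    have : (j + 1) * r ≤ n * r := Nat.mul_le_mul_right r hj
    refine ⟨⟨by omega, by rw [add_mul] at this; omega⟩, ?_⟩
    simp [Nat.ModEq, Nat.add_mul_mod_self_right]
  · rintro ⟨⟨hx1, hxn⟩, hx⟩
    obtain ⟨j, hj⟩ := (Nat.modEq_iff_dvd' hx1).mp hx.symm
    refine ⟨j, Nat.lt_of_mul_lt_mul_left (a := r) (by rw [mul_comm r n]; omega), by
      rw [mul_comm j r]; omega⟩

theorem card_Zset (hr : 0 < r) : (Zset n r).card = n := by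
  rw [Zset, Finset.card_image_of_injective, Finset.card_range]
  intro a b hab
  exact Nat.eq_of_mul_eq_mul_right hr (by simpa using hab)

theorem natCast_injOn_Zset (hr : 0 < r) (hnr : n.Coprime r) :
    Set.InjOn (Nat.cast : ℕ → ZMod n) (Zset n r) := by
  intro x hx y hy hxy
  rw [Finset.mem_coe, mem_Zset hr] at hx hy
  have hmod : x ≡ y [MOD n * r] := (Nat.modEq_and_modEq_iff_modEq_mul hnr).mp
    ⟨(ZMod.natCast_eq_natCast_iff _ _ _).mp hxy, hx.2.trans hy.2.symm⟩
  exact ZMod.natCast_injOn_Icc _ hx.1 hy.1 ((ZMod.natCast_eq_natCast_iff _ _ _).mpr hmod)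

theorem existsUnique_mem_Zset_natCast_eq_zero [NeZero n] (hr : 0 < r) (hnr : n.Coprime r) :
    ∃! x, x ∈ Zset n r ∧ (x : ZMod n) = 0 := by
  have hsurj := Finset.surjOn_of_injOn_of_card_le (t := Finset.univ) _
    (fun _ _ => Finset.mem_univ _) (natCast_injOn_Zset hr hnr)
    (by rw [Finset.card_univ, ZMod.card, card_Zset hr])
  obtain ⟨x, hx, hx0⟩ := hsurj (Finset.mem_univ (0 : ZMod n))
  exact ⟨x, ⟨hx, hx0⟩, fun y hy => natCast_injOn_Zset hr hnr hy.1 hx (hy.2.trans hx0.symm)⟩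

end Zset

section CosetsInZset

variable {q n r : ℕ}

theorem cosetOf_subset_Zset (hr : 0 < r) (hqr : q ≡ 1 [MOD r]) {i : ℕ} (hi : i ∈ Zset n r) :
    cosetOf q (n * r) i ⊆ Zset n r := by
  intro x hx
  obtain ⟨hxI, j, hj⟩ := mem_cosetOf.mp hx
  rw [mem_Zset hr] at hi ⊢
  refine ⟨hxI, ?_⟩
  calc x ≡ i * q ^ j [MOD r] :=
        ((ZMod.natCast_eq_natCast_iff _ _ _).mp (by push_cast; exact hj)).of_mul_left n
    _ ≡ 1 * 1 ^ j [MOD r] := hi.2.mul (hqr.pow j)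
    _ = 1 := by ring

theorem biUnion_cosetsIn (hr : 0 < r) (hqr : q ≡ 1 [MOD r]) :
    (cosetsIn q n r).biUnion id = Zset n r := by
  ext x
  simp only [cosetsIn, Finset.mem_biUnion, Finset.mem_image, id, exists_exists_and_eq_and]
  refine ⟨fun ⟨i, hi, hx⟩ => cosetOf_subset_Zset hr hqr hi hx, fun hx => ⟨x, hx, ?_⟩⟩
  exact self_mem_cosetOf ((mem_Zset hr).mp hx).1

theorem pairwiseDisjoint_cosetsIn (hq : IsOfFinOrder (q : ZMod (n * r))) :
    (cosetsIn q n r : Set (Finset ℕ)).PairwiseDisjoint id := by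
  simp only [cosetsIn, Finset.coe_image]
  rintro _ ⟨i, -, rfl⟩ _ ⟨i', -, rfl⟩ hne
  refine Finset.disjoint_left.mpr fun x hx hx' => hne ?_
  exact (cosetOf_eq_of_mem hq hx).symm.trans (cosetOf_eq_of_mem hq hx')

theorem sum_card_cosetsIn (hr : 0 < r) (hqr : q ≡ 1 [MOD r])
    (hq : IsOfFinOrder (q : ZMod (n * r))) : ∑ C ∈ cosetsIn q n r, C.card = n := by
  calc ∑ C ∈ cosetsIn q n r, C.card = ((cosetsIn q n r).biUnion id).card :=
        (Finset.card_biUnion (pairwiseDisjoint_cosetsIn hq)).symm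
    _ = n := by rw [biUnion_cosetsIn hr hqr, card_Zset hr]

variable [Fact n.Prime]

theorem isOfFinOrder_natCast_mul (hnr : n.Coprime r) (hqr : q ≡ 1 [MOD r])
    (hqn : (q : ZMod n) ≠ 0) : IsOfFinOrder (q : ZMod (n * r)) := by
  rw [← orderOf_pos_iff, ZMod.orderOf_natCast_mul_of_coprime hnr
    (ZMod.natCast_eq_one_iff_modEq.mpr hqr)]
  exact (isOfFinOrder_iff_isUnit.mpr hqn.isUnit).orderOf_pos

theorem card_cosetOf_mul (hr : 0 < r) (hnr : n.Coprime r) (hqr : q ≡ 1 [MOD r])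
    (hqn : (q : ZMod n) ≠ 0) (i : ℕ) :
    (cosetOf q (n * r) i).card = if (i : ZMod n) = 0 then 1 else orderOf (q : ZMod n) := by
  have : NeZero (n * r) := ⟨Nat.mul_ne_zero (Fact.out : n.Prime).ne_zero hr.ne'⟩
  rw [card_cosetOf, ZMod.ncard_range_mul_pow_of_coprime hnr
    (ZMod.natCast_eq_one_iff_modEq.mpr hqr)]
  split_ifs with hi
  · simp [hi]
  · exact ncard_range_mul_pow hi (isOfFinOrder_iff_isUnit.mpr hqn.isUnit)

end CosetsInZset

section Ncount

variable {q n r : ℕ} [Fact n.Prime]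

theorem Ncount_one (hr : 0 < r) (hnr : n.Coprime r) (hqr : q ≡ 1 [MOD r])
    (hqn : (q : ZMod n) ≠ 0) (hqn1 : (q : ZMod n) ≠ 1) : Ncount q n r 1 = 1 := by
  obtain ⟨i₀, ⟨hi₀, hi₀n⟩, huniq⟩ := existsUnique_mem_Zset_natCast_eq_zero hr hnr
  refine Finset.card_eq_one.mpr ⟨cosetOf q (n * r) i₀, ?_⟩
  ext C
  simp only [cosetsIn, Finset.mem_filter, Finset.mem_image, Finset.mem_singleton]
  constructor
  · rintro ⟨⟨i, hi, rfl⟩, hcard⟩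
    rw [card_cosetOf_mul hr hnr hqr hqn, ite_eq_left_iff, orderOf_eq_one_iff, not_imp_comm] at hcard
    rw [huniq i ⟨hi, hcard hqn1⟩]
  · rintro rfl
    exact ⟨⟨i₀, hi₀, rfl⟩, by rw [card_cosetOf_mul hr hnr hqr hqn, if_pos hi₀n]⟩

theorem card_eq_one_or_orderOf_of_mem_cosetsIn (hr : 0 < r) (hnr : n.Coprime r)
    (hqr : q ≡ 1 [MOD r]) (hqn : (q : ZMod n) ≠ 0) {C : Finset ℕ} (hC : C ∈ cosetsIn q n r) :
    C.card = 1 ∨ C.card = orderOf (q : ZMod n) := by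
  obtain ⟨i, -, rfl⟩ := Finset.mem_image.mp hC
  rw [card_cosetOf_mul hr hnr hqr hqn]
  split_ifs <;> simp

theorem Ncount_orderOf (hr : 0 < r) (hnr : n.Coprime r) (hqr : q ≡ 1 [MOD r])
    (hqn : (q : ZMod n) ≠ 0) (hqn1 : (q : ZMod n) ≠ 1) :
    Ncount q n r (orderOf (q : ZMod n)) = (n - 1) / orderOf (q : ZMod n) := by
  set m := orderOf (q : ZMod n)
  have hm0 : 0 < m := (isOfFinOrder_iff_isUnit.mpr hqn.isUnit).orderOf_pos
  have hm1 : m ≠ 1 := mt orderOf_eq_one_iff.mp hqn1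
  have hfilter : (cosetsIn q n r).filter (fun C => ¬ C.card = 1) =
      (cosetsIn q n r).filter (fun C => C.card = m) := by
    refine Finset.filter_congr fun C hC => ?_
    rcases card_eq_one_or_orderOf_of_mem_cosetsIn hr hnr hqr hqn hC with h | h <;> omega
  have hsum := sum_card_cosetsIn hr hqr (isOfFinOrder_natCast_mul hnr hqr hqn)
  have hN₁ := Ncount_one hr hnr hqr hqn hqn1
  unfold Ncount at hN₁ ⊢
  rw [← Finset.sum_filter_add_sum_filter_not _ (fun C => C.card = 1), hfilter,
    Finset.sum_const_nat fun C hC => (Finset.mem_filter.mp hC).2,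
    Finset.sum_const_nat fun C hC => (Finset.mem_filter.mp hC).2, hN₁] at hsum
  exact (Nat.div_eq_of_eq_mul_left hm0 (by omega)).symm

end Ncount

theorem stmt14_general (q n r : ℕ) (hn : n.Prime)
    (hco : Nat.Coprime n q) (hr : 0 < r) (hrdvd : r ∣ q - 1)
    (hndvd : ¬ n ∣ q - 1) (m : ℕ) (hm : m = orderOf (q : ZMod n)) :
    orderOf (q : ZMod (n * r)) = m ∧
    (∀ i ∈ Zset n r, (cosetOf q (n * r) i).card = 1 ∨ (cosetOf q (n * r) i).card = m) ∧
    Ncount q n r 1 = 1 ∧ Ncount q n r m = (n - 1) / m := by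
  have : Fact n.Prime := ⟨hn⟩
  have hq : 1 ≤ q := Nat.pos_of_ne_zero fun hq => by
    subst hq; exact hn.one_lt.ne' (Nat.coprime_zero_right n |>.mp hco)
  have hqr : q ≡ 1 [MOD r] := ((Nat.modEq_iff_dvd' hq).mpr hrdvd).symm
  have hnr : n.Coprime r := hn.coprime_iff_not_dvd.mpr fun h => hndvd (h.trans hrdvd)
  have hqn : (q : ZMod n) ≠ 0 := by
    rw [Ne, ZMod.natCast_eq_zero_iff]
    exact fun h => hn.one_lt.ne' (Nat.Coprime.eq_one_of_dvd hco h)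
  have hqn1 : (q : ZMod n) ≠ 1 := fun h =>
    hndvd ((Nat.modEq_iff_dvd' hq).mp (ZMod.natCast_eq_one_iff_modEq.mp h).symm)
  subst hm
  refine ⟨ZMod.orderOf_natCast_mul_of_coprime hnr
    (ZMod.natCast_eq_one_iff_modEq.mpr hqr), fun i hi => ?_,
    Ncount_one hr hnr hqr hqn hqn1, Ncount_orderOf hr hnr hqr hqn hqn1⟩
  exact card_eq_one_or_orderOf_of_mem_cosetsIn hr hnr hqr hqn (Finset.mem_image_of_mem _ hi)

theorem stmt14 (q n r : ℕ) (hq : IsPrimePow q) (hn : n.Prime)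
    (hco : Nat.Coprime n q) (hr : 0 < r) (hrdvd : r ∣ q - 1)
    (hndvd : ¬ n ∣ q - 1) (m : ℕ) (hm : m = orderOf (q : ZMod n)) :
    orderOf (q : ZMod (n * r)) = m ∧
    (∀ i ∈ Zset n r, (cosetOf q (n * r) i).card = 1 ∨ (cosetOf q (n * r) i).card = m) ∧
    Ncount q n r 1 = 1 ∧ Ncount q n r m = (n - 1) / m :=
  stmt14_general q n r hn hco hr hrdvd hndvd m hm
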